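/- arXiv:2401.06486 — 6 statements merged into one kernel-verified Lean document; each statement's English description precedes it below -/
import Mathlib

section
/- Let X_H be a finite-dimensional subspace of a Hilbert space X with inner product ⟪·,·⟫ and norm ‖·‖. Let A : X → X' satisfy strong monotonicity with constant α and local Lipschitz continuity with constants L[ϑ]. Fix ϑ > 0 and 0 < δ < 2α/L[ϑ]². Define Φ_H(δ; w) ∈ X_H by ⟪Φ_H(δ; w), v⟫ = ⟪w, v⟫ + δ·(F(v) − ⟨A w, v⟩) for all v ∈ X_H. Then for all v_H, w_H ∈ X_H with max{‖v_H‖, ‖v_H − w_H‖} ≤ ϑ, it holds that ‖Φ_H(δ; v_H) − Φ_H(δ; w_H)‖ ≤ q·‖v_H − w_H‖ with q² = 1 − δ·(2α − δ·L[ϑ]²) ∈ (0,1). -/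
/-!
Let `d = v - w` and let `r` be the Riesz representative of `A v - A w`. On `X_H` the difference
`Φ v - Φ w` is the Galerkin projection of `d - δ r`, so it is no longer than `d - δ r`. Expanding
`‖d - δ r‖² = ‖d‖² - 2δ⟪r, d⟫ + δ²‖r‖²`, strong monotonicity bounds `⟪r, d⟫` below by `α‖d‖²` and
local Lipschitz continuity bounds `‖r‖` above by `L[ϑ]‖d‖`, which gives `q²‖d‖²`.
-/

open RealInnerProductSpace

section

variable {X : Type*} [NormedAddCommGroup X] [InnerProductSpace ℝ X]

theorem norm_le_of_mem_of_inner_eq {K : Submodule ℝ X} {e x : X} (he : e ∈ K)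
    (h : ∀ v ∈ K, ⟪e, v⟫ = ⟪x, v⟫) : ‖e‖ ≤ ‖x‖ := by
  have hsq : ‖e‖ ^ 2 ≤ ‖x‖ * ‖e‖ :=
    calc ‖e‖ ^ 2 = ⟪e, e⟫ := (real_inner_self_eq_norm_sq e).symm
      _ = ⟪x, e⟫ := h e he
      _ ≤ ‖x‖ * ‖e‖ := real_inner_le_norm x e
  rcases (norm_nonneg e).eq_or_lt with he0 | he0
  · exact he0 ▸ norm_nonneg x
  · nlinarith

theorem StrongDual.norm_le_of_apply_le {g : StrongDual ℝ X} {C : ℝ} (hC : 0 ≤ C)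
    (h : ∀ φ, g φ ≤ C * ‖φ‖) : ‖g‖ ≤ C := by
  refine g.opNorm_le_bound hC fun φ => abs_le.mpr ⟨?_, h φ⟩
  have := h (-φ)
  rw [map_neg, norm_neg] at this
  linarith

theorem norm_sub_smul_le_sqrt_mul {d r : X} {α L δ : ℝ} (hδ : 0 ≤ δ)
    (hmono : α * ‖d‖ ^ 2 ≤ ⟪r, d⟫) (hlip : ‖r‖ ≤ L * ‖d‖) :
    ‖d - δ • r‖ ≤ Real.sqrt (1 - δ * (2 * α - δ * L ^ 2)) * ‖d‖ := by
  have hr : ‖r‖ ^ 2 ≤ L ^ 2 * ‖d‖ ^ 2 := by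
    rw [← mul_pow]; exact pow_le_pow_left₀ (norm_nonneg r) hlip 2
  have hexpand : ‖d - δ • r‖ ^ 2 = ‖d‖ ^ 2 - 2 * δ * ⟪r, d⟫ + δ ^ 2 * ‖r‖ ^ 2 := by
    rw [norm_sub_sq_real, norm_smul, real_inner_smul_right, real_inner_comm,
      Real.norm_eq_abs, abs_of_nonneg hδ]
    ring
  have hsq : ‖d - δ • r‖ ^ 2 ≤ (1 - δ * (2 * α - δ * L ^ 2)) * ‖d‖ ^ 2 := by
    rw [hexpand]
    nlinarith [mul_le_mul_of_nonneg_left hmono hδ, mul_le_mul_of_nonneg_left hr (sq_nonneg δ)]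
  calc ‖d - δ • r‖ = Real.sqrt (‖d - δ • r‖ ^ 2) := (Real.sqrt_sq (norm_nonneg _)).symm
    _ ≤ Real.sqrt ((1 - δ * (2 * α - δ * L ^ 2)) * ‖d‖ ^ 2) := Real.sqrt_le_sqrt hsq
    _ = Real.sqrt (1 - δ * (2 * α - δ * L ^ 2)) * ‖d‖ := by
      rw [Real.sqrt_mul' _ (sq_nonneg _), Real.sqrt_sq (norm_nonneg d)]

end

theorem zarantonello_contraction_general {X : Type*} [NormedAddCommGroup X] [InnerProductSpace ℝ X]
    [CompleteSpace X] (A : X → StrongDual ℝ X) (F : StrongDual ℝ X)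
    (α ϑ Lϑ : ℝ) (hL : 0 < Lϑ)
    (hSM : ∀ v w : X, α * ‖v - w‖ ^ 2 ≤ (A v - A w) (v - w))
    (hLIP : ∀ v w φ : X, max ‖v‖ ‖v - w‖ ≤ ϑ →
      (A v - A w) φ ≤ Lϑ * ‖v - w‖ * ‖φ‖)
    (XH : Submodule ℝ X) (δ : ℝ) (hδ0 : 0 < δ)
    (Φ : X → X) (hΦmem : ∀ w ∈ XH, Φ w ∈ XH)
    (hΦ : ∀ w ∈ XH, ∀ v ∈ XH, (inner ℝ (Φ w) v : ℝ) = (inner ℝ w v : ℝ) + δ * (F v - A w v)) :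
    ∀ vH ∈ XH, ∀ wH ∈ XH, max ‖vH‖ ‖vH - wH‖ ≤ ϑ →
      ‖Φ vH - Φ wH‖ ≤ Real.sqrt (1 - δ * (2 * α - δ * Lϑ ^ 2)) * ‖vH - wH‖ := by
  intro vH hvH wH hwH hmax
  set r := (InnerProductSpace.toDual ℝ X).symm (A vH - A wH)
  have hr : ∀ x, ⟪r, x⟫ = (A vH - A wH) x := fun _ => InnerProductSpace.toDual_symm_apply
  have hgalerkin : ∀ v ∈ XH, ⟪Φ vH - Φ wH, v⟫ = ⟪vH - wH - δ • r, v⟫ := by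
    intro v hv
    rw [inner_sub_left, hΦ vH hvH v hv, hΦ wH hwH v hv, inner_sub_left, inner_sub_left,
      real_inner_smul_left, hr, sub_apply]
    ring
  have hmono : α * ‖vH - wH‖ ^ 2 ≤ ⟪r, vH - wH⟫ := hr _ ▸ hSM vH wH
  have hlip : ‖r‖ ≤ Lϑ * ‖vH - wH‖ := by
    rw [LinearIsometryEquiv.norm_map]
    exact StrongDual.norm_le_of_apply_le (by positivity) (hLIP vH wH · hmax)
  exact (norm_le_of_mem_of_inner_eq (XH.sub_mem (hΦmem _ hvH) (hΦmem _ hwH)) hgalerkin).trans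
    (norm_sub_smul_le_sqrt_mul hδ0.le hmono hlip)

/-- Contraction of the Zarantonello iteration (Proposition 4). -/
theorem zarantonello_contraction {X : Type*} [NormedAddCommGroup X] [InnerProductSpace ℝ X]
    [CompleteSpace X] (A : X → StrongDual ℝ X) (F : StrongDual ℝ X)
    (α ϑ Lϑ : ℝ) (hα : 0 < α) (hϑ : 0 < ϑ) (hL : 0 < Lϑ)
    (hSM : ∀ v w : X, α * ‖v - w‖ ^ 2 ≤ (A v - A w) (v - w))
    (hLIP : ∀ v w φ : X, max ‖v‖ ‖v - w‖ ≤ ϑ →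
      (A v - A w) φ ≤ Lϑ * ‖v - w‖ * ‖φ‖)
    (XH : Submodule ℝ X) (δ : ℝ) (hδ0 : 0 < δ) (hδ : δ < 2 * α / Lϑ ^ 2)
    (Φ : X → X) (hΦmem : ∀ w ∈ XH, Φ w ∈ XH)
    (hΦ : ∀ w ∈ XH, ∀ v ∈ XH, (inner ℝ (Φ w) v : ℝ) = (inner ℝ w v : ℝ) + δ * (F v - A w v)) :
    ∀ vH ∈ XH, ∀ wH ∈ XH, max ‖vH‖ ‖vH - wH‖ ≤ ϑ →
      ‖Φ vH - Φ wH‖ ≤ Real.sqrt (1 - δ * (2 * α - δ * Lϑ ^ 2)) * ‖vH - wH‖ :=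
  zarantonello_contraction_general A F α ϑ Lϑ hL hSM hLIP XH δ hδ0 Φ hΦmem hΦ
end

section
/- Let X be a real Hilbert space, E : X → ℝ Gâteaux differentiable with derivative dE(w) = A w − F, where A is strongly monotone with constant α and locally Lipschitz with constants L[ϑ]. Let X_H be a closed subspace with Galerkin solution u_H⋆ of ⟨A u_H⋆, v_H⟩ = F(v_H) for all v_H ∈ X_H. Let ϑ ≥ ‖u_H⋆‖ and v_H ∈ X_H with ‖v_H − u_H⋆‖ ≤ ϑ. Then (α/2)·‖v_H − u_H⋆‖² ≤ E(v_H) − E(u_H⋆) ≤ (L[ϑ]/2)·‖v_H − u_H⋆‖². -/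
/-!
Along the segment `t ↦ u + t • e` from the Galerkin solution `u` to `v = u + e`, Galerkin
orthogonality turns the derivative of the energy into `(A (u + t • e) - A u) e`. Strong
monotonicity bounds it below by `α t ‖e‖²`, the local Lipschitz property above by `L[ϑ] t ‖e‖²`,
and integrating over `[0, 1]` gives the factor `1 / 2`.
-/

open Set

theorem sub_le_half_of_hasDerivAt_le {g g' : ℝ → ℝ} {c : ℝ} (hg : ∀ t, HasDerivAt g (g' t) t)
    (hg' : ∀ t ∈ Ioo (0 : ℝ) 1, g' t ≤ c * t) : g 1 - g 0 ≤ c / 2 := by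
  have hf : ∀ t, HasDerivAt (fun t => c / 2 * t ^ 2 - g t) (c * t - g' t) t := fun t => by
    refine (((hasDerivAt_pow 2 t).const_mul (c / 2)).sub (hg t)).congr_deriv ?_
    norm_num
    ring
  have hmono : MonotoneOn (fun t => c / 2 * t ^ 2 - g t) (Icc 0 1) :=
    monotoneOn_of_hasDerivWithinAt_nonneg (convex_Icc 0 1)
      (fun t _ => (hf t).continuousAt.continuousWithinAt) (fun t _ => (hf t).hasDerivWithinAt)
      (fun t ht => by rw [interior_Icc] at ht; linarith [hg' t ht])
  have h := hmono (left_mem_Icc.2 zero_le_one) (right_mem_Icc.2 zero_le_one) zero_le_one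
  norm_num at h
  linarith

theorem half_le_sub_of_le_hasDerivAt {g g' : ℝ → ℝ} {c : ℝ} (hg : ∀ t, HasDerivAt g (g' t) t)
    (hg' : ∀ t ∈ Ioo (0 : ℝ) 1, c * t ≤ g' t) : c / 2 ≤ g 1 - g 0 := by
  have h := sub_le_half_of_hasDerivAt_le (c := -c) (fun t => (hg t).neg)
    (fun t ht => by linarith [hg' t ht])
  simp only [Pi.neg_apply] at h
  linarith

section Segment

variable {X : Type*} [NormedAddCommGroup X] [NormedSpace ℝ X] {A : X → StrongDual ℝ X}

theorem hasDerivAt_energy_segment {F : StrongDual ℝ X} {E : X → ℝ}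
    (hdE : ∀ w v : X, HasDerivAt (fun t : ℝ => E (w + t • v)) (A w v - F v) 0)
    {u e : X} (horth : A u e = F e) (t : ℝ) :
    HasDerivAt (fun s : ℝ => E (u + s • e)) ((A (u + t • e) - A u) e) t := by
  have h : HasDerivAt (fun s : ℝ => E (u + t • e + s • e)) (A (u + t • e) e - F e) (t - t) := by
    rw [sub_self]
    exact hdE _ _
  have h' := h.comp_sub_const t t
  simp only [add_assoc, ← add_smul, add_sub_cancel] at h'
  rwa [_root_.sub_apply, horth]

theorem mul_norm_sq_le_apply_segment {α : ℝ}
    (hSM : ∀ v w : X, α * ‖v - w‖ ^ 2 ≤ (A v - A w) (v - w)) (u e : X) {t : ℝ} (ht : 0 < t) :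
    α * t * ‖e‖ ^ 2 ≤ (A (u + t • e) - A u) e := by
  have h := hSM (u + t • e) u
  rw [add_sub_cancel_left, map_smul, smul_eq_mul, norm_smul, Real.norm_of_nonneg ht.le] at h
  refine le_of_mul_le_mul_left ?_ ht
  linarith

theorem apply_segment_le_mul_norm_sq {L : ℝ → ℝ}
    (hLIP : ∀ ϑ : ℝ, 0 < ϑ → ∀ v w φ : X, max ‖v‖ ‖v - w‖ ≤ ϑ →
      (A v - A w) φ ≤ L ϑ * ‖v - w‖ * ‖φ‖)
    {u e : X} {ϑ : ℝ} (hu : ‖u‖ ≤ ϑ) (he : ‖e‖ ≤ ϑ) {t : ℝ} (ht : t ∈ Ioo (0 : ℝ) 1) :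
    (A (u + t • e) - A u) e ≤ L ϑ * t * ‖e‖ ^ 2 := by
  rcases eq_or_ne e 0 with rfl | he0
  · simp
  have hϑ : 0 < ϑ := (norm_pos_iff.2 he0).trans_le he
  have hte : ‖u - (u + t • e)‖ = t * ‖e‖ := by
    rw [sub_add_cancel_left, norm_neg, norm_smul, Real.norm_of_nonneg ht.1.le]
  have hmax : max ‖u‖ ‖u - (u + t • e)‖ ≤ ϑ := by
    rw [hte]
    exact max_le hu ((mul_le_of_le_one_left (norm_nonneg e) ht.2.le).trans he)
  have h := hLIP ϑ hϑ u (u + t • e) (-e) hmax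
  rw [hte, norm_neg, map_neg, ← neg_sub, _root_.neg_apply, neg_neg] at h
  exact h.trans_eq (by ring)

end Segment

theorem energy_norm_equivalence_general {X : Type*} [NormedAddCommGroup X] [InnerProductSpace ℝ X]
    (A : X → StrongDual ℝ X) (F : StrongDual ℝ X)
    (E : X → ℝ)
    (hdE : ∀ w v : X, HasDerivAt (fun t : ℝ => E (w + t • v)) (A w v - F v) 0)
    (α : ℝ) (L : ℝ → ℝ)
    (hSM : ∀ v w : X, α * ‖v - w‖ ^ 2 ≤ (A v - A w) (v - w))
    (hLIP : ∀ ϑ : ℝ, 0 < ϑ → ∀ v w φ : X, max ‖v‖ ‖v - w‖ ≤ ϑ →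
      (A v - A w) φ ≤ L ϑ * ‖v - w‖ * ‖φ‖)
    (XH : Submodule ℝ X)
    (uHstar : X) (huH : uHstar ∈ XH)
    (hsolH : ∀ vH ∈ XH, A uHstar vH = F vH)
    (ϑ : ℝ) (hϑ : ‖uHstar‖ ≤ ϑ)
    (vH : X) (hvH : vH ∈ XH) (hdist : ‖vH - uHstar‖ ≤ ϑ) :
    α / 2 * ‖vH - uHstar‖ ^ 2 ≤ E vH - E uHstar ∧
      E vH - E uHstar ≤ L ϑ / 2 * ‖vH - uHstar‖ ^ 2 := by
  set e := vH - uHstar with he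
  have hg := hasDerivAt_energy_segment hdE (hsolH e (XH.sub_mem hvH huH))
  have hends : E (uHstar + (1 : ℝ) • e) - E (uHstar + (0 : ℝ) • e) = E vH - E uHstar := by
    simp [he]
  rw [← hends]
  constructor
  · have h := half_le_sub_of_le_hasDerivAt (c := α * ‖e‖ ^ 2) hg fun t ht =>
      (mul_norm_sq_le_apply_segment hSM uHstar e ht.1).trans_eq' (by ring)
    linarith
  · have h := sub_le_half_of_hasDerivAt_le (c := L ϑ * ‖e‖ ^ 2) hg fun t ht =>
      (apply_segment_le_mul_norm_sq hLIP hϑ hdist ht).trans_eq (by ring)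
    linarith

/-- Energy–norm equivalence (Lemma 2). -/
theorem energy_norm_equivalence {X : Type*} [NormedAddCommGroup X] [InnerProductSpace ℝ X]
    [CompleteSpace X] (A : X → StrongDual ℝ X) (F : StrongDual ℝ X)
    (E : X → ℝ)
    (hdE : ∀ w v : X, HasDerivAt (fun t : ℝ => E (w + t • v)) (A w v - F v) 0)
    (α : ℝ) (hα : 0 < α) (L : ℝ → ℝ) (hLpos : ∀ ϑ : ℝ, 0 < ϑ → 0 < L ϑ)
    (hSM : ∀ v w : X, α * ‖v - w‖ ^ 2 ≤ (A v - A w) (v - w))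
    (hLIP : ∀ ϑ : ℝ, 0 < ϑ → ∀ v w φ : X, max ‖v‖ ‖v - w‖ ≤ ϑ →
      (A v - A w) φ ≤ L ϑ * ‖v - w‖ * ‖φ‖)
    (XH : Submodule ℝ X) (hXH : IsClosed (XH : Set X))
    (uHstar : X) (huH : uHstar ∈ XH)
    (hsolH : ∀ vH ∈ XH, A uHstar vH = F vH)
    (ϑ : ℝ) (hϑ : ‖uHstar‖ ≤ ϑ)
    (vH : X) (hvH : vH ∈ XH) (hdist : ‖vH - uHstar‖ ≤ ϑ) :
    α / 2 * ‖vH - uHstar‖ ^ 2 ≤ E vH - E uHstar ∧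
      E vH - E uHstar ≤ L ϑ / 2 * ‖vH - uHstar‖ ^ 2 :=
  energy_norm_equivalence_general A F E hdE α L hSM hLIP XH uHstar huH hsolH ϑ hϑ vH hvH hdist
end

section
/- Let (H_n)_{n∈ℕ₀} be a sequence of positive reals with H_n ≤ C·q^{n−m}·H_m for all m ≤ n where C > 0 and 0 < q < 1, and let (N_n) be a nondecreasing sequence of positive integers with N₀ ≥ 1. Then for every s > 0, sup_n N_n^s·H_n ≤ sup_n (∑_{m=0}^{n} N_m)^s·H_n ≤ C_cost · sup_n N_n^s·H_n, where C_cost depends only on C, q, and s. -/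
/-!
Fix a level `n`. Linear convergence turns a bound `N m ^ s * H m ≤ B` at an earlier level `m`
into `N m ^ s * H n ≤ C * q ^ (n - m) * B`, so after taking `s`-th roots the summands
`N m * H n ^ s⁻¹` of the cumulative cost decay geometrically with ratio `q ^ s⁻¹ < 1` as `m`
moves away from `n`. Their sum is therefore dominated by a geometric series, uniformly in `n`.
-/

open Finset

lemma sum_range_succ_le_of_le_geom {b : ℕ → ℝ} {c r : ℝ} (hc : 0 ≤ c) (hr0 : 0 ≤ r)
    (hr1 : r < 1) {n : ℕ} (hb : ∀ m ≤ n, b m ≤ c * r ^ (n - m)) :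
    ∑ m ∈ range (n + 1), b m ≤ c * (1 - r)⁻¹ := by
  have hgeom : ∑ k ∈ range (n + 1), r ^ k ≤ (1 - r)⁻¹ := by
    have := geom_sum_Ico_le_of_lt_one (m := 0) (n := n + 1) hr0 hr1
    rwa [pow_zero, one_div, ← range_eq_Ico] at this
  calc (∑ m ∈ range (n + 1), b m)
      ≤ ∑ m ∈ range (n + 1), c * r ^ (n - m) :=
        sum_le_sum fun m hm => hb m (Nat.lt_succ_iff.mp (mem_range.mp hm))
    _ = c * ∑ k ∈ range (n + 1), r ^ k := by
        rw [← mul_sum, ← sum_range_reflect (fun k => r ^ k) (n + 1)]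
        simp only [Nat.add_sub_cancel]
    _ ≤ c * (1 - r)⁻¹ := mul_le_mul_of_nonneg_left hgeom hc

lemma rpow_sum_range_succ_mul_le_of_geom {a : ℕ → ℝ} {h K q s : ℝ} (ha : ∀ m, 0 ≤ a m)
    (hh : 0 ≤ h) (hK : 0 ≤ K) (hq0 : 0 ≤ q) (hq1 : q < 1) (hs : 0 < s) {n : ℕ}
    (hbound : ∀ m ≤ n, a m ^ s * h ≤ K * q ^ (n - m)) :
    (∑ m ∈ range (n + 1), a m) ^ s * h ≤ K * ((1 - q ^ s⁻¹)⁻¹) ^ s := by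
  have hr0 : 0 ≤ q ^ s⁻¹ := Real.rpow_nonneg hq0 _
  have hr1 : q ^ s⁻¹ < 1 := Real.rpow_lt_one hq0 hq1 (inv_pos.mpr hs)
  have hh' : 0 ≤ h ^ s⁻¹ := Real.rpow_nonneg hh _
  have hroot : ∀ m ≤ n, a m * h ^ s⁻¹ ≤ K ^ s⁻¹ * (q ^ s⁻¹) ^ (n - m) := by
    intro m hm
    rw [Real.rpow_pow_comm hq0, ← Real.mul_rpow hK (pow_nonneg hq0 _),
      Real.le_rpow_inv_iff_of_pos (mul_nonneg (ha m) hh') (mul_nonneg hK (pow_nonneg hq0 _)) hs,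
      Real.mul_rpow (ha m) hh', Real.rpow_inv_rpow hh hs.ne']
    exact hbound m hm
  have hsum : (∑ m ∈ range (n + 1), a m) * h ^ s⁻¹ ≤ K ^ s⁻¹ * (1 - q ^ s⁻¹)⁻¹ := by
    rw [sum_mul]
    exact sum_range_succ_le_of_le_geom (by positivity) hr0 hr1 hroot
  have hsum_nonneg : 0 ≤ ∑ m ∈ range (n + 1), a m := sum_nonneg fun m _ => ha m
  have hr1' : 0 ≤ (1 - q ^ s⁻¹)⁻¹ := inv_nonneg.mpr (by linarith)
  calc (∑ m ∈ range (n + 1), a m) ^ s * h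
      = ((∑ m ∈ range (n + 1), a m) * h ^ s⁻¹) ^ s := by
        rw [Real.mul_rpow hsum_nonneg hh', Real.rpow_inv_rpow hh hs.ne']
    _ ≤ (K ^ s⁻¹ * (1 - q ^ s⁻¹)⁻¹) ^ s := Real.rpow_le_rpow (by positivity) hsum hs.le
    _ = K * ((1 - q ^ s⁻¹)⁻¹) ^ s := by
        rw [Real.mul_rpow (by positivity) hr1', Real.rpow_inv_rpow hK hs.ne']

theorem rates_eq_complexity_general (H : ℕ → ℝ) (N : ℕ → ℕ) (C q : ℝ)
    (hC : 0 < C) (hq0 : 0 < q) (hq1 : q < 1)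
    (hpos : ∀ n : ℕ, 0 < H n)
    (hlin : ∀ m n : ℕ, m ≤ n → H n ≤ C * q ^ (n - m) * H m) :
    ∀ s : ℝ, 0 < s →
      (∀ n : ℕ, ((N n : ℝ)) ^ s * H n ≤
        ((∑ m ∈ Finset.range (n + 1), (N m : ℝ))) ^ s * H n) ∧
      ∃ Ccost : ℝ, 0 < Ccost ∧ ∀ B : ℝ,
        (∀ n : ℕ, ((N n : ℝ)) ^ s * H n ≤ B) →
        ∀ n : ℕ, ((∑ m ∈ Finset.range (n + 1), (N m : ℝ))) ^ s * H n ≤ Ccost * B := by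
  intro s hs
  have hr1 : q ^ s⁻¹ < 1 := Real.rpow_lt_one hq0.le hq1 (inv_pos.mpr hs)
  refine ⟨fun n => ?_, C * ((1 - q ^ s⁻¹)⁻¹) ^ s, ?_, fun B hB n => ?_⟩
  · have hle : (N n : ℝ) ≤ ∑ m ∈ range (n + 1), (N m : ℝ) :=
      single_le_sum (fun m _ => Nat.cast_nonneg (N m)) (self_mem_range_succ n)
    gcongr
    exact (hpos n).le
  · have : 0 < 1 - q ^ s⁻¹ := by linarith
    positivity
  · have hB0 : 0 ≤ B := (mul_nonneg (by positivity) (hpos 0).le).trans (hB 0)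
    have hbound : ∀ m ≤ n, (N m : ℝ) ^ s * H n ≤ C * B * q ^ (n - m) := fun m hm =>
      calc (N m : ℝ) ^ s * H n
          ≤ (N m : ℝ) ^ s * (C * q ^ (n - m) * H m) := by gcongr; exact hlin m n hm
        _ = C * q ^ (n - m) * ((N m : ℝ) ^ s * H m) := by ring
        _ ≤ C * q ^ (n - m) * B := by gcongr; exact hB m
        _ = C * B * q ^ (n - m) := by ring
    calc (∑ m ∈ range (n + 1), (N m : ℝ)) ^ s * H n
        ≤ C * B * ((1 - q ^ s⁻¹)⁻¹) ^ s :=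
          rpow_sum_range_succ_mul_le_of_geom (fun m => Nat.cast_nonneg (N m)) (hpos n).le
            (by positivity) hq0.le hq1 hs hbound
      _ = C * ((1 - q ^ s⁻¹)⁻¹) ^ s * B := by ring

/-- Rates with respect to degrees of freedom coincide with rates with respect to
overall computational cost (Corollary 10). The suprema are expressed via an
arbitrary upper bound `B`. -/
theorem rates_eq_complexity (H : ℕ → ℝ) (N : ℕ → ℕ) (C q : ℝ)
    (hC : 0 < C) (hq0 : 0 < q) (hq1 : q < 1)
    (hpos : ∀ n : ℕ, 0 < H n)
    (hlin : ∀ m n : ℕ, m ≤ n → H n ≤ C * q ^ (n - m) * H m)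
    (hmono : Monotone N) (hN0 : 1 ≤ N 0) :
    ∀ s : ℝ, 0 < s →
      (∀ n : ℕ, ((N n : ℝ)) ^ s * H n ≤
        ((∑ m ∈ Finset.range (n + 1), (N m : ℝ))) ^ s * H n) ∧
      ∃ Ccost : ℝ, 0 < Ccost ∧ ∀ B : ℝ,
        (∀ n : ℕ, ((N n : ℝ)) ^ s * H n ≤ B) →
        ∀ n : ℕ, ((∑ m ∈ Finset.range (n + 1), (N m : ℝ))) ^ s * H n ≤ Ccost * B :=
  rates_eq_complexity_general H N C q hC hq0 hq1 hpos hlin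
end

section
/- Let η⋆, η ≥ 0 and μ ∈ [0,1) satisfy η⋆ ≤ (1 + μ)·η and (1 − μ)·η ≤ η⋆ (estimator equivalence). Let 0 < θ < 1 and set θ_mark = (θ^{1/2} + μ)²/(1 − μ)². Let R-restricted values η⋆_R, η_R ≥ 0 satisfy η⋆_R ≤ η_R + μ·η and η_R ≤ η⋆_R + μ·η. If θ_mark^{1/2}·η⋆ ≤ η⋆_R, then θ^{1/2}·η ≤ η_R. -/
theorem mul_le_of_perturbed_doerfler {s μ η ηstar ηR ηstarR : ℝ} (hμ1 : μ < 1)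
    (hsμ : 0 ≤ s + μ) (hlo : (1 - μ) * η ≤ ηstar) (hRup : ηstarR ≤ ηR + μ * η)
    (hmark : (s + μ) / (1 - μ) * ηstar ≤ ηstarR) :
    s * η ≤ ηR := by
  have h1μ : 0 < 1 - μ := sub_pos.mpr hμ1
  have hmarked : (s + μ) * η ≤ ηstarR :=
    calc (s + μ) * η = (s + μ) / (1 - μ) * ((1 - μ) * η) := by field_simp
      _ ≤ (s + μ) / (1 - μ) * ηstar := by gcongr
      _ ≤ ηstarR := hmark
  linarith

theorem sqrt_sq_div_sq {a b : ℝ} (ha : 0 ≤ a) (hb : 0 ≤ b) :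
    Real.sqrt (a ^ 2 / b ^ 2) = a / b := by
  rw [← div_pow, Real.sqrt_sq (div_nonneg ha hb)]

theorem doerfler_equivalence_general (η ηstar ηR ηstarR θ μ θmark : ℝ)
    (hμ0 : 0 ≤ μ) (hμ1 : μ < 1)
    (hθmark : θmark = (Real.sqrt θ + μ) ^ 2 / (1 - μ) ^ 2)
    (hlo : (1 - μ) * η ≤ ηstar)
    (hRup : ηstarR ≤ ηR + μ * η)
    (hmark : Real.sqrt θmark * ηstar ≤ ηstarR) :
    Real.sqrt θ * η ≤ ηR := by
  have hsμ : 0 ≤ Real.sqrt θ + μ := by positivity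
  rw [hθmark, sqrt_sq_div_sq hsμ (by linarith)] at hmark
  exact mul_le_of_perturbed_doerfler hμ1 hsμ hlo hRup hmark

/-- Equivalence of Dörfler marking (Lemma 13, (41)). -/
theorem doerfler_equivalence (η ηstar ηR ηstarR θ μ θmark : ℝ)
    (hη : 0 ≤ η) (hηstar : 0 ≤ ηstar) (hηR : 0 ≤ ηR) (hηstarR : 0 ≤ ηstarR)
    (hμ0 : 0 ≤ μ) (hμ1 : μ < 1) (hθ0 : 0 < θ) (hθ1 : θ < 1)
    (hθmark : θmark = (Real.sqrt θ + μ) ^ 2 / (1 - μ) ^ 2)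
    (hup : ηstar ≤ (1 + μ) * η) (hlo : (1 - μ) * η ≤ ηstar)
    (hRup : ηstarR ≤ ηR + μ * η) (hRlo : ηR ≤ ηstarR + μ * η)
    (hmark : Real.sqrt θmark * ηstar ≤ ηstarR) :
    Real.sqrt θ * η ≤ ηR :=
  doerfler_equivalence_general η ηstar ηR ηstarR θ μ θmark hμ0 hμ1 hθmark hlo hRup hmark
end

section
/- Let X be a Hilbert space, A : X → X' strongly monotone with constant α, X_H a closed subspace with Galerkin solution u_H⋆, and let Φ(δ; ·) denote the Zarantonello map on X_H defined by ⟪Φ(δ; w), v⟫ = ⟪w, v⟫ + δ·(F(v) − ⟨A w, v⟩) for all v ∈ X_H. Then for any w ∈ X_H, δ·α·‖u_H⋆ − w‖ ≤ ‖Φ(δ; w) − w‖. -/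
open RealInnerProductSpace

/-!
Testing the Zarantonello equation against `v = u_H⋆ - w ∈ X_H` and using the Galerkin property
gives `⟪Φ(δ;w) - w, u_H⋆ - w⟫ = δ ⟨A u_H⋆ - A w, u_H⋆ - w⟩ ≥ δ α ‖u_H⋆ - w‖²`; Cauchy–Schwarz
then leaves one factor `‖u_H⋆ - w‖` to cancel.
-/

theorem mul_norm_le_norm_of_mul_sq_le_inner {E : Type*} [NormedAddCommGroup E]
    [InnerProductSpace ℝ E] {c : ℝ} {x y : E} (h : c * ‖x‖ ^ 2 ≤ ⟪y, x⟫) :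
    c * ‖x‖ ≤ ‖y‖ := by
  rcases (norm_nonneg x).eq_or_lt with hx | hx
  · rw [← hx, mul_zero]
    exact norm_nonneg y
  · have hcs : c * ‖x‖ * ‖x‖ ≤ ‖y‖ * ‖x‖ := by
      calc c * ‖x‖ * ‖x‖ = c * ‖x‖ ^ 2 := by ring
        _ ≤ ⟪y, x⟫ := h
        _ ≤ ‖y‖ * ‖x‖ := real_inner_le_norm y x
    exact le_of_mul_le_mul_right hcs hx

theorem inner_sub_eq_of_galerkin {X : Type*} [NormedAddCommGroup X] [InnerProductSpace ℝ X]
    {A : X → StrongDual ℝ X} {F : StrongDual ℝ X} {XH : Submodule ℝ X} {uH w z : X} {δ : ℝ}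
    (hGal : ∀ v ∈ XH, A uH v = F v)
    (hΦ : ∀ v ∈ XH, ⟪z, v⟫ = ⟪w, v⟫ + δ * (F v - A w v)) {v : X} (hv : v ∈ XH) :
    ⟪z - w, v⟫ = δ * (A uH - A w) v := by
  rw [inner_sub_left, hΦ v hv, sub_apply, hGal v hv]
  ring

theorem zarantonello_lower_bound_general {X : Type*} [NormedAddCommGroup X] [InnerProductSpace ℝ X]
    (A : X → StrongDual ℝ X) (F : StrongDual ℝ X)
    (α : ℝ)
    (hSM : ∀ v w : X, α * ‖v - w‖ ^ 2 ≤ (A v - A w) (v - w))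
    (XH : Submodule ℝ X) (uH : X) (huH : uH ∈ XH)
    (hGal : ∀ v ∈ XH, A uH v = F v)
    (δ : ℝ) (hδ : 0 < δ)
    (w : X) (hw : w ∈ XH) (z : X)
    (hΦ : ∀ v ∈ XH, (inner ℝ z v : ℝ) = (inner ℝ w v : ℝ) + δ * (F v - A w v)) :
    δ * α * ‖uH - w‖ ≤ ‖z - w‖ := by
  apply mul_norm_le_norm_of_mul_sq_le_inner
  calc δ * α * ‖uH - w‖ ^ 2 = δ * (α * ‖uH - w‖ ^ 2) := by ring
    _ ≤ δ * (A uH - A w) (uH - w) := by gcongr; exact hSM uH w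
    _ = ⟪z - w, uH - w⟫ := (inner_sub_eq_of_galerkin hGal hΦ (XH.sub_mem huH hw)).symm

/-- Helper estimate (33): `δ·α·‖u_H⋆ − w‖ ≤ ‖Φ(δ;w) − w‖`. -/
theorem zarantonello_lower_bound {X : Type*} [NormedAddCommGroup X] [InnerProductSpace ℝ X]
    [CompleteSpace X] (A : X → StrongDual ℝ X) (F : StrongDual ℝ X)
    (α : ℝ) (hα : 0 < α)
    (hSM : ∀ v w : X, α * ‖v - w‖ ^ 2 ≤ (A v - A w) (v - w))
    (XH : Submodule ℝ X) (uH : X) (huH : uH ∈ XH)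
    (hGal : ∀ v ∈ XH, A uH v = F v)
    (δ : ℝ) (hδ : 0 < δ)
    (w : X) (hw : w ∈ XH) (z : X) (hz : z ∈ XH)
    (hΦ : ∀ v ∈ XH, (inner ℝ z v : ℝ) = (inner ℝ w v : ℝ) + δ * (F v - A w v)) :
    δ * α * ‖uH - w‖ ≤ ‖z - w‖ :=
  zarantonello_lower_bound_general A F α hSM XH uH huH hGal δ hδ w hw z hΦ
end

section
/- Let (a_ℓ)_{ℓ} and (b_ℓ)_{ℓ} be finite or infinite sequences of nonnegative reals indexed by 0 ≤ ℓ ≤ L (L ∈ ℕ ∪ {∞}) satisfying: (i) a_{ℓ+1} ≤ q̃·a_ℓ + b_ℓ for all ℓ with 0 < q̃ < 1, (ii) b_{ℓ+N} ≤ C₁·a_ℓ for all ℓ, N ≥ 0 with ℓ + N ≤ L − 1, and (iii) ∑_{ℓ'=ℓ}^{ℓ+N−1} b_{ℓ'}² ≤ C₂·a_ℓ² for all admissible ℓ, N. Then there exists C > 0 depending only on q̃, C₁, C₂ such that ∑_{ℓ'=ℓ+1}^{L} a_{ℓ'} ≤ C·a_ℓ for all ℓ, i.e., the sequence (a_ℓ)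 is tail-summable with tail dominated by the current term. -/
/-!
Squaring the perturbed contraction `a (ℓ+1) ≤ q a ℓ + b ℓ` with Young's inequality gives
`a (ℓ+1)² ≤ q a ℓ² + b ℓ² / (1 - q)`; summing this telescopes, so the `ℓ²`-bound on `b` turns
into an `ℓ²`-tail bound `∑_{n ≥ ℓ} a n² ≤ K a ℓ²`. Such a tail bound forces geometric decay:
the tail `T ℓ = ∑_{n ≥ ℓ} a n²` satisfies `T (ℓ+1) = T ℓ - a ℓ² ≤ (1 - 1/K) T ℓ`. Taking square
roots, `a` decays geometrically as well, and a geometric series sums its tail.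
-/

open Finset

lemma sq_le_mul_sq_add_of_le_mul_add {q x y c : ℝ} (hq0 : 0 ≤ q) (hq1 : q < 1) (hy : 0 ≤ y)
    (h : y ≤ q * x + c) : y ^ 2 ≤ q * x ^ 2 + c ^ 2 / (1 - q) := by
  have h1q : 0 < 1 - q := sub_pos.2 hq1
  have hgap : q * x ^ 2 + c ^ 2 / (1 - q) - (q * x + c) ^ 2 =
      q / (1 - q) * ((1 - q) * x - c) ^ 2 := by
    field_simp
    ring
  have : 0 ≤ q / (1 - q) * ((1 - q) * x - c) ^ 2 := by positivity
  nlinarith [pow_le_pow_left₀ hy h 2]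

lemma sum_range_le_of_le_mul_add {x c : ℕ → ℝ} {q : ℝ} (hq1 : q < 1) (hx : ∀ k, 0 ≤ x k)
    (h : ∀ k, x (k + 1) ≤ q * x k + c k) (ℓ N : ℕ) :
    ∑ n ∈ range N, x (ℓ + n) ≤ (x ℓ + ∑ n ∈ range N, c (ℓ + n)) / (1 - q) := by
  have hshift : ∑ n ∈ range N, x (ℓ + (n + 1)) ≤ ∑ n ∈ range N, (q * x (ℓ + n) + c (ℓ + n)) :=
    sum_le_sum fun n _ => h (ℓ + n)
  have htele : ∑ n ∈ range N, x (ℓ + (n + 1)) + x ℓ = ∑ n ∈ range N, x (ℓ + n) + x (ℓ + N) := by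
    rw [← sum_range_succ (fun n => x (ℓ + n)), sum_range_succ' (fun n => x (ℓ + n)), add_zero]
  rw [sum_add_distrib, ← mul_sum] at hshift
  rw [le_div_iff₀ (sub_pos.2 hq1)]
  linarith [hx (ℓ + N)]

lemma le_mul_pow_of_sum_range_le {x : ℕ → ℝ} {K : ℝ} (hK : 1 ≤ K) (hx : ∀ k, 0 ≤ x k)
    (h : ∀ ℓ N, ∑ n ∈ range N, x (ℓ + n) ≤ K * x ℓ) (ℓ n : ℕ) :
    x (ℓ + n) ≤ K * (1 - 1 / K) ^ n * x ℓ := by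
  have hsummable : ∀ ℓ, Summable fun n => x (ℓ + n) := fun ℓ =>
    summable_of_sum_range_le (fun n => hx _) (h ℓ)
  set T : ℕ → ℝ := fun ℓ => ∑' n, x (ℓ + n) with hT
  have hT_le : ∀ ℓ, T ℓ ≤ K * x ℓ := fun ℓ => Real.tsum_le_of_sum_range_le (fun n => hx _) (h ℓ)
  have hT_succ : ∀ ℓ, T ℓ = x ℓ + T (ℓ + 1) := fun ℓ => by
    simp only [hT, (hsummable ℓ).tsum_eq_zero_add, add_zero, ← add_assoc, add_right_comm ℓ]
  have hT_nonneg : ∀ ℓ, 0 ≤ T ℓ := fun ℓ => tsum_nonneg fun n => hx _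
  have hT_contr : ∀ ℓ, T (ℓ + 1) ≤ (1 - 1 / K) * T ℓ := fun ℓ => by
    have : T ℓ / K ≤ x ℓ := by
      rw [div_le_iff₀ (by linarith)]
      linarith [hT_le ℓ]
    linarith [hT_succ ℓ, show (1 - 1 / K) * T ℓ = T ℓ - T ℓ / K by ring]
  have hρ : 0 ≤ 1 - 1 / K := sub_nonneg.2 ((div_le_one (by linarith)).2 hK)
  have hdecay : T (ℓ + n) ≤ (1 - 1 / K) ^ n * T ℓ :=
    le_geom (u := fun n => T (ℓ + n)) hρ n fun k _ => hT_contr (ℓ + k)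
  calc x (ℓ + n) ≤ T (ℓ + n) := by linarith [hT_succ (ℓ + n), hT_nonneg (ℓ + n + 1)]
    _ ≤ (1 - 1 / K) ^ n * T ℓ := hdecay
    _ ≤ (1 - 1 / K) ^ n * (K * x ℓ) := mul_le_mul_of_nonneg_left (hT_le ℓ) (pow_nonneg hρ n)
    _ = K * (1 - 1 / K) ^ n * x ℓ := by ring

lemma sum_range_le_of_le_mul_pow {y : ℕ → ℝ} {D r : ℝ} (hD : 0 ≤ D) (hr0 : 0 ≤ r) (hr1 : r < 1)
    (hy : ∀ k, 0 ≤ y k) (h : ∀ ℓ n, y (ℓ + n) ≤ D * r ^ n * y ℓ) (ℓ N : ℕ) :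
    ∑ n ∈ range N, y (ℓ + 1 + n) ≤ D / (1 - r) * y ℓ := by
  have hgeom : ∑ n ∈ range N, r ^ n ≤ 1 / (1 - r) := by
    have := geom_sum_Ico_le_of_lt_one (m := 0) (n := N) hr0 hr1
    rwa [← range_eq_Ico, pow_zero] at this
  calc ∑ n ∈ range N, y (ℓ + 1 + n)
      ≤ ∑ n ∈ range N, D * y ℓ * r ^ n := sum_le_sum fun n _ => by
        have hle := h ℓ (n + 1)
        rw [← add_assoc, add_right_comm] at hle
        have : r ^ (n + 1) ≤ r ^ n := pow_le_pow_of_le_one hr0 hr1.le n.le_succ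
        nlinarith [mul_nonneg hD (hy ℓ)]
    _ = D * y ℓ * ∑ n ∈ range N, r ^ n := by rw [mul_sum]
    _ ≤ D * y ℓ * (1 / (1 - r)) := mul_le_mul_of_nonneg_left hgeom (mul_nonneg hD (hy ℓ))
    _ = D / (1 - r) * y ℓ := by ring

lemma exists_sum_range_le_of_sum_range_sq_le {a : ℕ → ℝ} {K : ℝ} (hK : 1 ≤ K)
    (ha : ∀ k, 0 ≤ a k) (h : ∀ ℓ N, ∑ n ∈ range N, a (ℓ + n) ^ 2 ≤ K * a ℓ ^ 2) :
    ∃ C : ℝ, 0 < C ∧ ∀ ℓ N : ℕ, ∑ n ∈ range N, a (ℓ + 1 + n) ≤ C * a ℓ := by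
  set ρ := 1 - 1 / K
  have hρ0 : 0 ≤ ρ := sub_nonneg.2 ((div_le_one (by linarith)).2 hK)
  have hρ1 : ρ < 1 := sub_lt_self 1 (one_div_pos.2 (by linarith))
  have hsq := le_mul_pow_of_sum_range_le hK (fun k => sq_nonneg (a k)) h
  have hdecay : ∀ ℓ n, a (ℓ + n) ≤ √K * √ρ ^ n * a ℓ := fun ℓ n => by
    refine le_of_sq_le_sq ?_ (mul_nonneg (by positivity) (ha ℓ))
    calc a (ℓ + n) ^ 2 ≤ K * ρ ^ n * a ℓ ^ 2 := hsq ℓ n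
      _ = (√K * √ρ ^ n * a ℓ) ^ 2 := by
        rw [mul_pow, mul_pow, ← pow_mul, mul_comm n, pow_mul, Real.sq_sqrt (by linarith),
          Real.sq_sqrt hρ0]
  have hsρ : √ρ < 1 := (Real.sqrt_lt' one_pos).2 (by rwa [one_pow])
  exact ⟨√K / (1 - √ρ), div_pos (Real.sqrt_pos.2 (by linarith)) (sub_pos.2 hsρ),
    sum_range_le_of_le_mul_pow (Real.sqrt_nonneg K) (Real.sqrt_nonneg ρ) hsρ ha hdecay⟩

theorem tail_summability_general (a b : ℕ → ℝ) (qt C₂ : ℝ)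
    (hq0 : 0 < qt) (hq1 : qt < 1) (hC₂ : 0 < C₂)
    (ha : ∀ ℓ : ℕ, 0 ≤ a ℓ)
    (hcontr : ∀ ℓ : ℕ, a (ℓ + 1) ≤ qt * a ℓ + b ℓ)
    (hsum : ∀ ℓ N : ℕ, ∑ n ∈ Finset.range N, (b (ℓ + n)) ^ 2 ≤ C₂ * (a ℓ) ^ 2) :
    ∃ C : ℝ, 0 < C ∧ ∀ ℓ N : ℕ,
      ∑ n ∈ Finset.range N, a (ℓ + 1 + n) ≤ C * a ℓ := by
  have h1q : 0 < 1 - qt := sub_pos.2 hq1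
  have hsq_contr : ∀ k, a (k + 1) ^ 2 ≤ qt * a k ^ 2 + b k ^ 2 / (1 - qt) := fun k =>
    sq_le_mul_sq_add_of_le_mul_add hq0.le hq1 (ha _) (hcontr k)
  refine exists_sum_range_le_of_sum_range_sq_le (K := (1 + C₂ / (1 - qt)) / (1 - qt)) ?_ ha
    fun ℓ N => ?_
  · rw [le_div_iff₀ h1q]
    linarith [div_nonneg hC₂.le h1q.le]
  · calc ∑ n ∈ range N, a (ℓ + n) ^ 2
        ≤ (a ℓ ^ 2 + (∑ n ∈ range N, b (ℓ + n) ^ 2) / (1 - qt)) / (1 - qt) := by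
          rw [sum_div]
          exact sum_range_le_of_le_mul_add hq1 (fun k => sq_nonneg (a k)) hsq_contr ℓ N
      _ ≤ (a ℓ ^ 2 + C₂ * a ℓ ^ 2 / (1 - qt)) / (1 - qt) := by gcongr; exact hsum ℓ N
      _ = (1 + C₂ / (1 - qt)) / (1 - qt) * a ℓ ^ 2 := by ring

/-- Tail-summability criterion from [Lemma 6, fps2023]. -/
theorem tail_summability (a b : ℕ → ℝ) (qt C₁ C₂ : ℝ)
    (hq0 : 0 < qt) (hq1 : qt < 1) (hC₁ : 0 < C₁) (hC₂ : 0 < C₂)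
    (ha : ∀ ℓ : ℕ, 0 ≤ a ℓ) (hb : ∀ ℓ : ℕ, 0 ≤ b ℓ)
    (hcontr : ∀ ℓ : ℕ, a (ℓ + 1) ≤ qt * a ℓ + b ℓ)
    (hdom : ∀ ℓ N : ℕ, b (ℓ + N) ≤ C₁ * a ℓ)
    (hsum : ∀ ℓ N : ℕ, ∑ n ∈ Finset.range N, (b (ℓ + n)) ^ 2 ≤ C₂ * (a ℓ) ^ 2) :
    ∃ C : ℝ, 0 < C ∧ ∀ ℓ N : ℕ,
      ∑ n ∈ Finset.range N, a (ℓ + 1 + n) ≤ C * a ℓ :=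
  tail_summability_general a b qt C₂ hq0 hq1 hC₂ ha hcontr hsum
end
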